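/- Let n ∈ ℕ be even, let r be sampled uniformly at random from E_n = {v ∈ {-1,1}^n : #₁(v) even}, let x ∈ {-1,1}^n, and let t ∈ ℤ be such that 2t lies in the support of ⟨r,x⟩. Then Pr[⟨r,x⟩ = 2t] = C(n, n/2 + t) / 2^{n-1}. -/

import Mathlib

open Finset

/-- The ±1 value associated with a boolean. -/
def sgn (b : Bool) : ℤ := if b then 1 else -1

/-- The set of "even" sign vectors: those with an even number of +1 entries. -/
def evenVecs (n : ℕ) : Finset (Fin n → Bool) :=
  univ.filter fun r => Even ((univ.filter fun i => r i = true).card)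

/-- Binomial coefficient with an integer lower argument, interpreted as 0
when the argument is negative. -/
def chooseZ (n : ℕ) (k : ℤ) : ℕ := if 0 ≤ k then n.choose k.toNat else 0

/-!
Encode `x` as `sgn ∘ b`. Then `⟨sgn ∘ r, sgn ∘ b⟩ = n - 2 d(r, b)` with `d` the Hamming distance,
so the event `⟨r, x⟩ = 2t` is the Hamming sphere around `b` of radius `d = n/2 - t`, which has
`C(n, d) = C(n, n/2 + t)` points. Modulo 2 the number of `true` entries of `r` is that of `b`
plus `d(r, b)`, so this sphere lies entirely in `E_n` as soon as it meets it, and `|E_n| = 2^(n-1)`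
because flipping one coordinate swaps `E_n` with its complement.
-/

section

variable {ι : Type*} [Fintype ι]

lemma sum_sgn_mul_sgn (r b : ι → Bool) :
    ∑ i, sgn (r i) * sgn (b i) = Fintype.card ι - 2 * hammingDist r b := by
  have h : ∀ i, sgn (r i) * sgn (b i) = 1 - 2 * if r i ≠ b i then 1 else 0 := by
    intro i; cases r i <;> cases b i <;> rfl
  simp only [h, hammingDist, sum_sub_distrib, ← mul_sum, sum_boole, sum_const, card_univ,
    nsmul_eq_mul, mul_one]

lemma card_true_add_card_true_add_hammingDist (r b : ι → Bool) :
    #{i | r i = true} + #{i | b i = true} + hammingDist r b = 2 * #{i | (r i || b i) = true} := by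
  simp only [hammingDist, card_filter, ← sum_add_distrib, mul_sum]
  exact sum_congr rfl fun i _ => by cases r i <;> cases b i <;> rfl

lemma even_card_true_iff (r b : ι → Bool) :
    Even #{i | r i = true} ↔ Even (#{i | b i = true} + hammingDist r b) :=
  Nat.even_add.mp <| by
    rw [← add_assoc, card_true_add_card_true_add_hammingDist]; exact even_two_mul _

lemma even_card_true_iff_of_hammingDist_eq {r r' b : ι → Bool}
    (h : hammingDist r b = hammingDist r' b) :
    Even #{i | r i = true} ↔ Even #{i | r' i = true} := by
  rw [even_card_true_iff r b, even_card_true_iff r' b, h]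

variable [DecidableEq ι]

lemma even_card_true_update_not_iff (r : ι → Bool) (j : ι) :
    Even #{i | Function.update r j (!r j) i = true} ↔ ¬Even #{i | r i = true} := by
  have hdist : hammingDist (Function.update r j (!r j)) r = 1 :=
    card_eq_one.mpr ⟨j, by ext i; by_cases h : i = j <;> simp [h]⟩
  rw [even_card_true_iff _ r, hdist, Nat.even_add_one]

lemma card_filter_even_card_true :
    #{r : ι → Bool | Even #{i | r i = true}} = 2 ^ (Fintype.card ι - 1) := by
  rcases isEmpty_or_nonempty ι with hι | ⟨⟨j⟩⟩
  · simp
  have hflip : #{r : ι → Bool | Even #{i | r i = true}} =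
      #{r : ι → Bool | ¬Even #{i | r i = true}} := by
    refine card_nbij' (fun r => Function.update r j (!r j)) (fun r => Function.update r j (!r j))
      ?_ ?_ ?_ ?_
    · intro r hr
      simpa only [coe_filter, mem_univ, true_and, Set.mem_ofPred_eq,
        even_card_true_update_not_iff, not_not] using hr
    · intro r hr
      simpa only [coe_filter, mem_univ, true_and, Set.mem_ofPred_eq,
        even_card_true_update_not_iff] using hr
    · intro r _; simp
    · intro r _; simp
  have hsum := card_filter_add_card_filter_not (s := univ) fun r : ι → Bool =>
    Even #{i | r i = true}
  rw [← hflip, card_univ, Fintype.card_fun, Fintype.card_bool,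
    ← Nat.two_pow_pred_add_two_pow_pred (Fintype.card_pos_iff.mpr ⟨j⟩)] at hsum
  omega

lemma card_filter_hammingDist_eq (b : ι → Bool) (d : ℕ) :
    #{r : ι → Bool | hammingDist r b = d} = (Fintype.card ι).choose d := by
  have hflips (A : Finset ι) : ({i | (b i ^^ decide (i ∈ A)) ≠ b i} : Finset ι) = A := by
    ext i; cases h : b i <;> simp [h]
  rw [← card_univ, ← card_powersetCard]
  refine card_nbij' (fun r => ({i | r i ≠ b i} : Finset ι))
    (fun A i => b i ^^ decide (i ∈ A)) ?_ ?_ ?_ ?_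
  · intro r hr
    simpa [hammingDist] using hr
  · intro A hA
    simpa [hammingDist, hflips] using hA
  · intro r _; funext i; cases h₁ : r i <;> cases h₂ : b i <;> simp [h₁, h₂]
  · intro A _; exact hflips A

end

lemma card_evenVecs (n : ℕ) : #(evenVecs n) = 2 ^ (n - 1) :=
  (card_filter_even_card_true (ι := Fin n)).trans (by rw [Fintype.card_fin])

theorem prob_inner_eq_two_t_general {n : ℕ} (x : Fin n → ℤ)
    (hx : ∀ i, x i = 1 ∨ x i = -1) (t : ℤ)
    (hsupp : ∃ r ∈ evenVecs n, ∑ i, sgn (r i) * x i = 2 * t) :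
    (((evenVecs n).filter fun r => ∑ i, sgn (r i) * x i = 2 * t).card : ℝ) /
        ((evenVecs n).card : ℝ) =
      (chooseZ n ((n : ℤ) / 2 + t) : ℝ) / 2 ^ (n - 1) := by
  obtain ⟨b, rfl⟩ : ∃ b : Fin n → Bool, x = fun i => sgn (b i) :=
    ⟨fun i => decide (x i = 1), funext fun i => by rcases hx i with h | h <;> simp [sgn, h]⟩
  beta_reduce
  obtain ⟨r₀, hr₀, hr₀t⟩ := hsupp
  set d := hammingDist r₀ b
  have hd : d ≤ n := hammingDist_le_card_fintype.trans_eq (Fintype.card_fin n)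
  rw [sum_sgn_mul_sgn, Fintype.card_fin] at hr₀t
  have hevent (r : Fin n → Bool) :
      ∑ i, sgn (r i) * sgn (b i) = 2 * t ↔ hammingDist r b = d := by
    rw [sum_sgn_mul_sgn, Fintype.card_fin]; omega
  have hfilter : {r ∈ evenVecs n | ∑ i, sgn (r i) * sgn (b i) = 2 * t} =
      ({r | hammingDist r b = d} : Finset (Fin n → Bool)) := by
    ext r
    simp only [evenVecs, mem_filter, mem_univ, true_and, hevent, and_iff_right_iff_imp]
    exact fun h => (even_card_true_iff_of_hammingDist_eq h).mpr (mem_filter.mp hr₀).2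
  have hchoose : chooseZ n ((n : ℤ) / 2 + t) = n.choose d := by
    rw [chooseZ, if_pos (by omega), show (n : ℤ) / 2 + t = ((n - d : ℕ) : ℤ) by omega,
      Int.toNat_natCast, Nat.choose_symm hd]
  rw [hfilter, card_filter_hammingDist_eq, card_evenVecs, Fintype.card_fin, hchoose]
  push_cast
  rfl

/-- For n even, r uniform on E_n, x ∈ {-1,1}^n and t ∈ ℤ with 2t in
the support of ⟨r,x⟩, we have Pr[⟨r,x⟩ = 2t] = C(n, n/2 + t) / 2^(n-1). -/
theorem prob_inner_eq_two_t {n : ℕ} (hn : Even n) (x : Fin n → ℤ)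
    (hx : ∀ i, x i = 1 ∨ x i = -1) (t : ℤ)
    (hsupp : ∃ r ∈ evenVecs n, ∑ i, sgn (r i) * x i = 2 * t) :
    (((evenVecs n).filter fun r => ∑ i, sgn (r i) * x i = 2 * t).card : ℝ) /
        ((evenVecs n).card : ℝ) =
      (chooseZ n ((n : ℤ) / 2 + t) : ℝ) / 2 ^ (n - 1) :=
  prob_inner_eq_two_t_general x hx t hsupp
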